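/- arXiv:2405.12210 — 2 statements merged into one kernel-verified Lean document; each statement's English description precedes it below -/
import Mathlib

section
/- For each x ∈ ℝ, t ∈ [0,T] and k ∈ ℂ∖S, the function m obeys the symmetry m(x,t,k) = m(x,t,1/k). (Note that S contains 0 and is invariant under k ↦ 1/k, so 1/k ∈ ℂ∖S whenever k ∈ ℂ∖S.) -/
open MeasureTheory Filter Topology

noncomputable section

namespace Paper

/-- Iterated logarithm: `iterLog r` is the `r`-th iterate of `Real.log`. -/
def iterLog : ℕ → ℝ → ℝ
  | 0, s => s
  | r + 1, s => Real.log (iterLog r s)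

/-- `LOG(s; r⃗, a⃗, σ) = (-1)^σ ∏_j (log_{r_j} s)^{a_j}` (empty product convention for `p = 0`). -/
def LOG {p : ℕ} (r : Fin p → ℕ) (a : Fin p → ℝ) (σ : ℕ) (s : ℝ) : ℝ :=
  (-1 : ℝ) ^ σ * ∏ j : Fin p, iterLog (r j) s ^ a j

/-- `f(t) ≍ g(t)` as `t → T⁻`: there are `T₀ ∈ (0,T)` and `c₁, c₂ > 0` with
`c₁ g(t) ≤ f(t) ≤ c₂ g(t)` for all `t ∈ [T₀, T)`. -/
def AsympTo (T : ℝ) (f g : ℝ → ℝ) : Prop :=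
  ∃ T₀ ∈ Set.Ioo (0 : ℝ) T, ∃ c₁ > (0 : ℝ), ∃ c₂ > (0 : ℝ),
    ∀ t ∈ Set.Ico T₀ T, c₁ * g t ≤ f t ∧ f t ≤ c₂ * g t

/-- Partial derivative in `x`. -/
def px (u : ℝ → ℝ → ℝ) : ℝ → ℝ → ℝ := fun x t => deriv (fun x' => u x' t) x

/-- Partial derivative in `t`. -/
def pt (u : ℝ → ℝ → ℝ) : ℝ → ℝ → ℝ := fun x t => deriv (fun t' => u x t') t

/-- Mixed partial derivative `∂_x^{q₁} ∂_t^{q₂}` for real-valued functions. -/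
def pdR (q₁ q₂ : ℕ) (u : ℝ → ℝ → ℝ) : ℝ → ℝ → ℝ :=
  fun x t => iteratedDeriv q₁ (fun x' => iteratedDeriv q₂ (fun t' => u x' t') t) x

/-- Mixed partial derivative `∂_x^{q₁} ∂_t^{q₂}` for complex-valued functions. -/
def pdC (q₁ q₂ : ℕ) (g : ℝ → ℝ → ℂ) : ℝ → ℝ → ℂ :=
  fun x t => iteratedDeriv q₁ (fun x' => iteratedDeriv q₂ (fun t' => g x' t') t) x

/-- Schwartz class solution of the "bad" Boussinesq equation
`u_tt = u_xx + (u²)_xx + u_xxxx` on `ℝ × [0,T)`. -/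
def IsSchwartzSolution (T : ℝ) (u : ℝ → ℝ → ℝ) : Prop :=
  ContDiffOn ℝ (⊤ : ℕ∞) (fun q : ℝ × ℝ => u q.1 q.2) (Set.univ ×ˢ Set.Ico 0 T) ∧
  (∀ x : ℝ, ∀ t ∈ Set.Ico (0 : ℝ) T,
      pt (pt u) x t =
        px (px u) x t + px (px fun x' t' => u x' t' ^ 2) x t + px (px (px (px u))) x t) ∧
  (∀ N : ℕ, 1 ≤ N → ∀ τ ∈ Set.Ico (0 : ℝ) T, ∃ B : ℝ, ∀ x : ℝ, ∀ t ∈ Set.Icc (0 : ℝ) τ,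
      ∑ i ∈ Finset.range (N + 1), (1 + |x|) ^ N * |iteratedDeriv i (fun x' => u x' t) x| ≤ B)

/-- `ω = e^{2πi/3}`. -/
def ω : ℂ := Complex.exp (2 * Real.pi * Complex.I / 3)

/-- `e₁ = e^{-iπ/6}`. -/
def e₁ : ℂ := Complex.exp (-(Real.pi / 6) * Complex.I)

/-- `e₂ = e^{5iπ/6}`. -/
def e₂ : ℂ := Complex.exp (5 * Real.pi / 6 * Complex.I)

/-- `e₃ = e^{iπ/6}`. -/
def e₃ : ℂ := Complex.exp (Real.pi / 6 * Complex.I)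

/-- `e₄ = e^{7iπ/6}`. -/
def e₄ : ℂ := Complex.exp (7 * Real.pi / 6 * Complex.I)

/-- Contour integral over `Γ̃ = {r e^{-iπ/6} : r > 1} ∪ {r e^{5iπ/6} : r > 1}`,
each ray oriented in the direction of increasing modulus. -/
def contourInt (g : ℂ → ℂ) : ℂ :=
  (∫ r in Set.Ioi (1 : ℝ), g ((r : ℂ) * e₁)) * e₁ +
  (∫ r in Set.Ioi (1 : ℝ), g ((r : ℂ) * e₂)) * e₂

/-- The contour `Γ̃` as a set. -/
def Gammat : Set ℂ :=
  {k : ℂ | ∃ r : ℝ, 1 < r ∧ k = (r : ℂ) * e₁} ∪ {k : ℂ | ∃ r : ℝ, 1 < r ∧ k = (r : ℂ) * e₂}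

/-- `Γ̃_m = Γ̃ ∩ {k : |k| > 2}`. -/
def GammatM : Set ℂ := Gammat ∩ {k : ℂ | 2 < ‖k‖}

/-- The set `S`: the closure of
`{r e^{iπ/6} : r > 1} ∪ {r e^{7iπ/6} : r > 1} ∪ {r e^{5iπ/6} : 0 < r < 1} ∪ {r e^{-iπ/6} : 0 < r < 1}`. -/
def Sset : Set ℂ :=
  closure ({k : ℂ | ∃ r : ℝ, 1 < r ∧ k = (r : ℂ) * e₃} ∪
    {k : ℂ | ∃ r : ℝ, 1 < r ∧ k = (r : ℂ) * e₄} ∪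
    {k : ℂ | ∃ r : ℝ, 0 < r ∧ r < 1 ∧ k = (r : ℂ) * e₂} ∪
    {k : ℂ | ∃ r : ℝ, 0 < r ∧ r < 1 ∧ k = (r : ℂ) * e₁})

/-- `r̃(k) = (ω² - k²)/(1 - ω²k²)`. -/
def rtilde (k : ℂ) : ℂ := (ω ^ 2 - k ^ 2) / (1 - ω ^ 2 * k ^ 2)

/-- `f̃₀`: equals `f₂(k) = r̃(k) conj(f₁(1/conj k))` on the upper ray `(i, i∞)`
and `f₁(1/k)` on the lower ray `(-i, -i∞)`. -/
def ftilde0 (f₁ : ℂ → ℂ) (k : ℂ) : ℂ :=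
  if 0 < k.im then rtilde k * starRingEnd ℂ (f₁ (1 / starRingEnd ℂ k)) else f₁ (1 / k)

/-- The kernel `F(x,t,k,k₁)`. -/
def Fker (x₀ T : ℝ) (f₁ : ℂ → ℂ) (x t : ℝ) (k k₁ : ℂ) : ℂ :=
  Complex.exp (((x - x₀ : ℝ) : ℂ) / 2 * (ω * k₁)) *
  Complex.exp (((T - t : ℝ) : ℂ) / 4 * (ω * k₁) ^ 2) *
  (ω ^ 2 / (ω ^ 2 * k₁ - k) - ω / k₁ ^ 2 / (1 / (ω ^ 2 * k₁) - k)) *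
  (ftilde0 f₁ (ω * k₁) *
    Complex.exp (-((x : ℂ) / 2) * (1 / (ω * k₁)) + (t : ℂ) / 4 * (1 / (ω * k₁)) ^ 2) /
    (2 * (Real.pi : ℂ) * Complex.I))

/-- Iterated kernels: `mSeq F j` is `m_j`, with `mSeq F 0 ≡ 1` and
`m_{j+1}(k) = ∫_{Γ̃} F(k,k₁) m_j(k₁) dk₁`. -/
def mSeq (F : ℂ → ℂ → ℂ) : ℕ → ℂ → ℂ
  | 0 => fun _ => 1
  | j + 1 => fun k => contourInt fun k₁ => F k k₁ * mSeq F j k₁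

/-- `m(x,t,k) = 1 + Σ_{j=1}^∞ m_j(x,t,k)`. -/
def mFun (x₀ T : ℝ) (f₁ : ℂ → ℂ) (x t : ℝ) (k : ℂ) : ℂ :=
  1 + ∑' j : ℕ, mSeq (Fker x₀ T f₁ x t) (j + 1) k

/-- `F^{(1)}(x,t,k₁)`. -/
def F1ker (x₀ T : ℝ) (f₁ : ℂ → ℂ) (x t : ℝ) (k₁ : ℂ) : ℂ :=
  -(Complex.exp (((x - x₀ : ℝ) : ℂ) / 2 * (ω * k₁)) *
    Complex.exp (((T - t : ℝ) : ℂ) / 4 * (ω * k₁) ^ 2) *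
    Complex.exp (-((x : ℂ) / 2) * (1 / (ω * k₁)) + (t : ℂ) / 4 * (1 / (ω * k₁)) ^ 2) *
    (ftilde0 f₁ (ω * k₁) / (2 * (Real.pi : ℂ) * Complex.I)) * (ω ^ 2 - ω / k₁ ^ 2))

/-- `m1Seq x₀ T f₁ x t j = m_{j+1}^{(1)}(x,t)`, i.e. `m_j^{(1)} = m1Seq … (j-1)` for `j ≥ 1`. -/
def m1Seq (x₀ T : ℝ) (f₁ : ℂ → ℂ) (x t : ℝ) (j : ℕ) : ℂ :=
  contourInt fun k₁ => F1ker x₀ T f₁ x t k₁ * mSeq (Fker x₀ T f₁ x t) j k₁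

end Paper

/-!
Each `m_j(k)` depends on `k` only through the factor
`ω²/(ω²k₁ - k) - (ω/k₁²)/(1/(ω²k₁) - k)` of the kernel. With `a = ω²k₁` and `ω³ = 1` this factor
is `(a/(a - k) - 1/(1 - ak))/k₁`, which is invariant under `k ↦ 1/k` as long as `a ≠ k` and
`ak ≠ 1`. For `k₁ ∈ Γ̃` both `ω²k₁` and `1/(ω²k₁)` lie in `S`, so this holds for every `k ∉ S`,
and the symmetry passes to every `m_j` and hence to `m`.
-/

namespace Paper

lemma omega_pow_three : ω ^ 3 = 1 := by
  rw [ω, ← Complex.exp_nat_mul, ← Complex.exp_two_pi_mul_I]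
  congr 1
  push_cast
  ring

lemma omega_sq_mul_e₁ : ω ^ 2 * e₁ = e₄ := by
  rw [ω, e₁, e₄, ← Complex.exp_nat_mul, ← Complex.exp_add]
  congr 1
  push_cast
  ring

lemma omega_sq_mul_e₂ : ω ^ 2 * e₂ = e₃ := by
  rw [ω, e₂, e₃, ← Complex.exp_nat_mul, ← Complex.exp_add, ← mul_one (Complex.exp (_ * _)),
    ← Complex.exp_two_pi_mul_I, ← Complex.exp_add]
  congr 1
  push_cast
  ring

lemma e₄_mul_e₂ : e₄ * e₂ = 1 := by
  rw [e₄, e₂, ← Complex.exp_add, ← Complex.exp_two_pi_mul_I]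
  congr 1
  ring

lemma e₃_mul_e₁ : e₃ * e₁ = 1 := by
  rw [e₃, e₁, ← Complex.exp_add, ← Complex.exp_zero]
  congr 1
  ring

lemma ofReal_mul_inv_of_mul_eq_one {u v : ℂ} (huv : u * v = 1) (r : ℝ) :
    ((r : ℂ) * u)⁻¹ = ((r⁻¹ : ℝ) : ℂ) * v := by
  rw [mul_inv, inv_eq_of_mul_eq_one_right huv, Complex.ofReal_inv]

lemma ne_zero_of_mem_Gammat {k₁ : ℂ} (hk₁ : k₁ ∈ Gammat) : k₁ ≠ 0 := by
  rcases hk₁ with ⟨r, hr, rfl⟩ | ⟨r, hr, rfl⟩ <;>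
    exact mul_ne_zero (Complex.ofReal_ne_zero.mpr (by linarith)) (Complex.exp_ne_zero _)

lemma zero_mem_Sset : (0 : ℂ) ∈ Sset := by
  have hlim : Tendsto (fun r : ℝ => (r : ℂ) * e₁) (𝓝[>] 0) (𝓝 0) :=
    ((Complex.continuous_ofReal.mul continuous_const).tendsto' 0 0 (by simp)).mono_left
      nhdsWithin_le_nhds
  refine mem_closure_of_tendsto hlim ?_
  filter_upwards [Ioo_mem_nhdsGT (zero_lt_one' ℝ)] with r hr
  exact Or.inr ⟨r, hr.1, hr.2, rfl⟩

lemma omega_sq_mul_mem_Sset {k₁ : ℂ} (hk₁ : k₁ ∈ Gammat) :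
    ω ^ 2 * k₁ ∈ Sset ∧ (ω ^ 2 * k₁)⁻¹ ∈ Sset := by
  rcases hk₁ with ⟨r, hr, rfl⟩ | ⟨r, hr, rfl⟩
  · rw [mul_left_comm, omega_sq_mul_e₁, ofReal_mul_inv_of_mul_eq_one e₄_mul_e₂]
    exact ⟨subset_closure (Or.inl (Or.inl (Or.inr ⟨r, hr, rfl⟩))),
      subset_closure (Or.inl (Or.inr ⟨r⁻¹, by positivity, inv_lt_one_of_one_lt₀ hr, rfl⟩))⟩
  · rw [mul_left_comm, omega_sq_mul_e₂, ofReal_mul_inv_of_mul_eq_one e₃_mul_e₁]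
    exact ⟨subset_closure (Or.inl (Or.inl (Or.inl ⟨r, hr, rfl⟩))),
      subset_closure (Or.inr ⟨r⁻¹, by positivity, inv_lt_one_of_one_lt₀ hr, rfl⟩)⟩

lemma div_sub_one_div_one_sub_mul_one_div {K : Type*} [Field K] {a k : K} (hk : k ≠ 0) (hak : a ≠ k)
    (hak' : a * k ≠ 1) :
    a / (a - k) - 1 / (1 - a * k) = a / (a - 1 / k) - 1 / (1 - a * (1 / k)) := by
  have h₁ : a - k ≠ 0 := sub_ne_zero.mpr hak
  have h₂ : 1 - a * k ≠ 0 := sub_ne_zero.mpr hak'.symm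
  rw [show a - 1 / k = -((1 - a * k) / k) by field_simp; ring,
    show 1 - a * (1 / k) = -((a - k) / k) by field_simp; ring]
  field_simp
  ring

lemma cauchy_factor_eq {K : Type*} [Field K] {w : K} (hw : w ^ 3 = 1) {k₁ : K} (hk₁ : k₁ ≠ 0)
    (k : K) :
    w ^ 2 / (w ^ 2 * k₁ - k) - w / k₁ ^ 2 / (1 / (w ^ 2 * k₁) - k)
      = (w ^ 2 * k₁ / (w ^ 2 * k₁ - k) - 1 / (1 - w ^ 2 * k₁ * k)) / k₁ := by
  have hw₀ : w ≠ 0 := by rintro rfl; norm_num at hw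
  have hpole : w ^ 2 / (w ^ 2 * k₁ - k) = w ^ 2 * k₁ / (w ^ 2 * k₁ - k) / k₁ := by
    rw [div_right_comm, mul_div_cancel_right₀ _ hk₁]
  have hmirror : w / k₁ ^ 2 / (1 / (w ^ 2 * k₁) - k) = 1 / (1 - w ^ 2 * k₁ * k) / k₁ := by
    rw [show 1 / (w ^ 2 * k₁) - k = (1 - w ^ 2 * k₁ * k) / (w ^ 2 * k₁) by field_simp]
    field_simp
    linear_combination (1 - w ^ 2 * k₁ * k)⁻¹ * hw
  rw [hpole, hmirror, sub_div]

lemma contourInt_congr {g h : ℂ → ℂ} (hgh : ∀ k₁ ∈ Gammat, g k₁ = h k₁) :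
    contourInt g = contourInt h := by
  rw [contourInt, contourInt,
    setIntegral_congr_fun measurableSet_Ioi fun r hr => hgh _ (Or.inl ⟨r, hr, rfl⟩),
    setIntegral_congr_fun measurableSet_Ioi fun r hr => hgh _ (Or.inr ⟨r, hr, rfl⟩)]

lemma mSeq_succ_congr (F : ℂ → ℂ → ℂ) {k k' : ℂ} (h : ∀ k₁ ∈ Gammat, F k k₁ = F k' k₁)
    (j : ℕ) : mSeq F (j + 1) k = mSeq F (j + 1) k' :=
  contourInt_congr fun k₁ hk₁ => congrArg (· * mSeq F j k₁) (h k₁ hk₁)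

lemma Fker_one_div (x₀ T : ℝ) (f₁ : ℂ → ℂ) (x t : ℝ) {k k₁ : ℂ} (hk : k ∉ Sset)
    (hk₁ : k₁ ∈ Gammat) : Fker x₀ T f₁ x t k k₁ = Fker x₀ T f₁ x t (1 / k) k₁ := by
  obtain ⟨hS, hS'⟩ := omega_sq_mul_mem_Sset hk₁
  have hk₀ : k ≠ 0 := by rintro rfl; exact hk zero_mem_Sset
  have hne : ω ^ 2 * k₁ ≠ k := by rintro rfl; exact hk hS
  have hne' : ω ^ 2 * k₁ * k ≠ 1 := fun h => hk (inv_eq_of_mul_eq_one_right h ▸ hS')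
  have hfactor := cauchy_factor_eq omega_pow_three (ne_zero_of_mem_Gammat hk₁)
  rw [Fker, Fker, hfactor, hfactor, div_sub_one_div_one_sub_mul_one_div hk₀ hne hne']

end Paper

open Paper

theorem statement_5_general (x₀ T : ℝ) (f₁ : ℂ → ℂ) (x t : ℝ) (k : ℂ) (hk : k ∉ Sset) :
    mFun x₀ T f₁ x t k = mFun x₀ T f₁ x t (1 / k) := by
  rw [mFun, mFun, tsum_congr fun j =>
    mSeq_succ_congr _ (fun k₁ hk₁ => Fker_one_div x₀ T f₁ x t hk hk₁) j]

/-- Proposition 4.1 (d): the symmetry `m(x,t,k) = m(x,t,1/k)` for `k ∈ ℂ ∖ S`. -/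
theorem statement_5 (x₀ T M : ℝ) (hT : 0 < T) (hM : 2 ≤ M) (f₁ : ℂ → ℂ)
    (hsmooth : ContDiffOn ℝ (⊤ : ℕ∞) (fun y : ℝ => f₁ (Complex.I * (y : ℂ))) (Set.Ioo (0 : ℝ) 1))
    (hvanish : ∀ y ∈ Set.Icc (1 / 2 : ℝ) 1, f₁ (Complex.I * (y : ℂ)) = 0)
    (hL1 : IntegrableOn (fun y : ℝ => ‖f₁ (Complex.I / (y : ℂ))‖ / y) (Set.Ioi 1))
    (hL1le : ∫ y in Set.Ioi (1 : ℝ), ‖f₁ (Complex.I / (y : ℂ))‖ / y ≤ 1 / M)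
    (x t : ℝ) (ht : t ∈ Set.Icc (0 : ℝ) T) (k : ℂ) (hk : k ∉ Sset) :
    mFun x₀ T f₁ x t k = mFun x₀ T f₁ x t (1 / k) :=
  statement_5_general x₀ T f₁ x t k hk
end
end

section
/- For all x ∈ ℝ and t ∈ [0,T], one has ∫_{Γ̃} sup_{s ∈ Γ̃_m} |F(x,t,s,k₁)| |dk₁| ≤ 1/M, where |dk₁| denotes arclength measure on Γ̃. -/
open MeasureTheory Filter Topology

noncomputable section

open Paper

/-!
On both rays of `Γ̃` one has `ω k₁ = iη` with `|η| = |k₁| = ρ`, so the three exponentials in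
`F` have modulus at most one for `0 ≤ t ≤ T`, and `|f̃₀(iη)| ≤ |f₁(i/ρ)|` because `|r̃| ≤ 1` on
the imaginary axis. Since `ω²` turns `Γ̃` away from itself, `|ω²k₁ - s| ≥ ρ/2` for `s ∈ Γ̃`,
while `|1/(ω²k₁) - s| ≥ 1` for `|s| > 2`; the rational factor is thus at most `3/ρ`, and as
`3 ≤ π`, `sup_s |F(s, k₁)| ≤ |f₁(i/ρ)| / (2ρ)`. Each ray then contributes at most half of
`∫₁^∞ |f₁(i/ρ)| / ρ dρ ≤ 1/M`.
-/

namespace Paper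

open Complex

lemma norm_exp_le_one {z : ℂ} (hz : z.re ≤ 0) : ‖exp z‖ ≤ 1 := by
  rwa [norm_exp, Real.exp_le_one_iff]

lemma ω_eq_exp_ofReal_mul_I : ω = exp ((2 * Real.pi / 3 : ℝ) * I) := by
  rw [ω]; push_cast; ring_nf

lemma norm_ω : ‖ω‖ = 1 := by
  rw [ω_eq_exp_ofReal_mul_I, norm_exp_ofReal_mul_I]

lemma ω_re : ω.re = -1 / 2 := by
  rw [ω_eq_exp_ofReal_mul_I, exp_ofReal_mul_I_re,
    show 2 * Real.pi / 3 = Real.pi - Real.pi / 3 by ring, Real.cos_pi_sub, Real.cos_pi_div_three]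
  norm_num

lemma ω_im : ω.im = √3 / 2 := by
  rw [ω_eq_exp_ofReal_mul_I, exp_ofReal_mul_I_im,
    show 2 * Real.pi / 3 = Real.pi - Real.pi / 3 by ring, Real.sin_pi_sub, Real.sin_pi_div_three]

lemma im_ω_sq : (ω ^ 2).im = -(√3 / 2) := by
  rw [sq, mul_im, ω_re, ω_im]; ring

lemma ω_mul_e₁ : ω * e₁ = I := by
  rw [ω, e₁, ← exp_add, show 2 * (Real.pi : ℂ) * I / 3 + -((Real.pi : ℂ) / 6) * I
    = Real.pi / 2 * I by ring, exp_pi_div_two_mul_I]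

lemma norm_e₁ : ‖e₁‖ = 1 := by
  rw [e₁, show -((Real.pi : ℂ) / 6) * I = ((-(Real.pi / 6) : ℝ) : ℂ) * I by push_cast; ring,
    norm_exp_ofReal_mul_I]

lemma norm_ofReal_mul_e₁ (η : ℝ) : ‖(η * e₁ : ℂ)‖ = |η| := by
  rw [norm_mul, norm_e₁, mul_one, norm_real, Real.norm_eq_abs]

lemma e₂_eq_neg_e₁ : e₂ = -e₁ := by
  rw [e₂, e₁, show 5 * (Real.pi : ℂ) / 6 * I = -((Real.pi : ℂ) / 6) * I + Real.pi * I by ring,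
    exp_add, exp_pi_mul_I, mul_neg_one]

lemma exists_eq_ofReal_mul_e₁_of_mem_Gammat {k : ℂ} (hk : k ∈ Gammat) :
    ∃ σ : ℝ, k = σ * e₁ := by
  rcases hk with ⟨r, -, rfl⟩ | ⟨r, -, rfl⟩
  · exact ⟨r, rfl⟩
  · exact ⟨-r, by rw [e₂_eq_neg_e₁, ofReal_neg, mul_neg, neg_mul]⟩

-- `ω²` rotates the line `ℝ e₁` by `4π/3`, so it meets `ℝ e₁` only at `0`
lemma half_abs_le_norm_ω_sq_mul_sub (η σ : ℝ) :
    |η| / 2 ≤ ‖ω ^ 2 * (η * e₁) - σ * e₁‖ := by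
  have him : |(ω ^ 2 * η - σ).im| = |η| * (√3 / 2) := by
    rw [sub_im, mul_im, im_ω_sq, ofReal_im, ofReal_im, ofReal_re]
    simp only [mul_zero, zero_add, sub_zero, abs_mul, abs_neg]
    rw [abs_of_pos (by positivity : (0 : ℝ) < √3 / 2), mul_comm]
  have hsqrt : 1 ≤ √3 := Real.one_le_sqrt.mpr (by norm_num)
  calc |η| / 2 ≤ |η| * (√3 / 2) := by nlinarith [abs_nonneg η]
    _ = |(ω ^ 2 * η - σ).im| := him.symm
    _ ≤ ‖ω ^ 2 * η - σ‖ := abs_im_le_norm _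
    _ = ‖ω ^ 2 * (η * e₁) - σ * e₁‖ := by
      rw [show ω ^ 2 * (η * e₁) - σ * e₁ = (ω ^ 2 * η - σ) * e₁ by ring, norm_mul, norm_e₁,
        mul_one]

lemma norm_Fker_factor_le {k s : ℂ} (hk : 1 ≤ ‖k‖) (hs : 2 ≤ ‖s‖)
    (hsep : ‖k‖ / 2 ≤ ‖ω ^ 2 * k - s‖) :
    ‖ω ^ 2 / (ω ^ 2 * k - s) - ω / k ^ 2 / (1 / (ω ^ 2 * k) - s)‖ ≤ 3 / ‖k‖ := by
  have hk0 : 0 < ‖k‖ := by linarith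
  have hpole : 1 ≤ ‖1 / (ω ^ 2 * k) - s‖ := by
    have hinv : ‖1 / (ω ^ 2 * k)‖ ≤ 1 := by
      rw [norm_div, norm_one, norm_mul, norm_pow, norm_ω, one_pow, one_mul]
      exact div_le_one_of_le₀ hk (norm_nonneg _)
    have := norm_sub_norm_le s (1 / (ω ^ 2 * k))
    rw [norm_sub_rev] at this
    linarith
  have h₁ : ‖ω ^ 2 / (ω ^ 2 * k - s)‖ ≤ 2 / ‖k‖ := by
    rw [norm_div, norm_pow, norm_ω, one_pow, div_le_div_iff₀ (by linarith) hk0]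
    linarith
  have h₂ : ‖ω / k ^ 2 / (1 / (ω ^ 2 * k) - s)‖ ≤ 1 / ‖k‖ := by
    rw [norm_div, norm_div, norm_ω, norm_pow, div_div]
    gcongr
    nlinarith
  calc _ ≤ ‖ω ^ 2 / (ω ^ 2 * k - s)‖ + ‖ω / k ^ 2 / (1 / (ω ^ 2 * k) - s)‖ := norm_sub_le _ _
    _ ≤ 2 / ‖k‖ + 1 / ‖k‖ := add_le_add h₁ h₂
    _ = 3 / ‖k‖ := by ring

lemma norm_rtilde_ofReal_mul_I_le (η : ℝ) : ‖rtilde (η * I)‖ ≤ 1 := by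
  have hconj : ω ^ 2 * starRingEnd ℂ (ω ^ 2) = 1 := by
    rw [mul_conj, normSq_eq_norm_sq, norm_pow, norm_ω]; norm_num
  -- the denominator is `ω²` times the conjugate of the numerator
  have hden : 1 - ω ^ 2 * (η * I) ^ 2 = ω ^ 2 * starRingEnd ℂ (ω ^ 2 - (η * I) ^ 2) := by
    rw [map_sub, mul_sub, hconj]
    simp only [mul_pow, I_sq, map_mul, map_neg, map_one, map_pow, conj_ofReal]
  rw [rtilde, hden, norm_div, norm_mul, norm_pow, norm_ω, RCLike.norm_conj, one_pow, one_mul]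
  exact div_self_le_one _

lemma norm_ftilde0_ofReal_mul_I_le (f₁ : ℂ → ℂ) {η : ℝ} (hη : η ≠ 0) :
    ‖ftilde0 f₁ (η * I)‖ ≤ ‖f₁ (I / |η|)‖ := by
  have hηc : (η : ℂ) ≠ 0 := ofReal_ne_zero.mpr hη
  rcases hη.lt_or_gt with hneg | hpos
  · have harg : 1 / ((η : ℂ) * I) = I / |η| := by
      rw [abs_of_neg hneg, ofReal_neg]; field_simp; rw [I_sq, neg_neg]
    rw [ftilde0, if_neg (by simpa using hneg.le), harg]
  · have harg : 1 / starRingEnd ℂ ((η : ℂ) * I) = I / |η| := by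
      rw [abs_of_pos hpos, map_mul, conj_ofReal, conj_I]; field_simp; rw [I_sq]
    rw [ftilde0, if_pos (by simpa using hpos), harg, norm_mul, RCLike.norm_conj]
    exact mul_le_of_le_one_left (norm_nonneg _) (norm_rtilde_ofReal_mul_I_le η)

lemma norm_Fker_ofReal_mul_e₁_le (x₀ T : ℝ) (f₁ : ℂ → ℂ) (x : ℝ) {t : ℝ}
    (ht : t ∈ Set.Icc 0 T) {η : ℝ} (hη : 1 ≤ |η|) {s : ℂ} (hs : s ∈ GammatM) :
    ‖Fker x₀ T f₁ x t s (η * e₁)‖ ≤ ‖f₁ (I / |η|)‖ / (2 * |η|) := by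
  obtain ⟨⟨σ, rfl⟩, hσ⟩ := And.imp_left exists_eq_ofReal_mul_e₁_of_mem_Gammat hs
  have hη0 : η ≠ 0 := abs_pos.mp (by linarith)
  have hωk : ω * (η * e₁) = η * I := by rw [mul_left_comm, ω_mul_e₁]
  have hphase : ‖exp (((x - x₀ : ℝ) : ℂ) / 2 * (η * I))‖ ≤ 1 :=
    norm_exp_le_one (by simp)
  have hgauss : ‖exp (((T - t : ℝ) : ℂ) / 4 * (η * I) ^ 2)‖ ≤ 1 :=
    norm_exp_le_one (by simp [sq]; exact mul_nonneg (by linarith [ht.2]) (mul_self_nonneg η))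
  have hgauss_inv :
      ‖exp (-((x : ℂ) / 2) * (1 / (η * I)) + (t : ℂ) / 4 * (1 / (η * I)) ^ 2)‖ ≤ 1 :=
    norm_exp_le_one (by simp [sq]; exact mul_nonneg (by linarith [ht.1]) (mul_self_nonneg _))
  have hfactor := norm_Fker_factor_le (k := η * e₁) (s := σ * e₁) (by rwa [norm_ofReal_mul_e₁])
    hσ.le (by rw [norm_ofReal_mul_e₁]; exact half_abs_le_norm_ω_sq_mul_sub η σ)
  rw [norm_ofReal_mul_e₁] at hfactor
  have hftilde := norm_ftilde0_ofReal_mul_I_le f₁ hη0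
  have h2πI : ‖2 * (Real.pi : ℂ) * I‖ = 2 * Real.pi := by
    rw [norm_mul, norm_mul, norm_I, norm_real, Real.norm_eq_abs, abs_of_pos Real.pi_pos]; simp
  rw [Fker, hωk, norm_mul, norm_mul, norm_mul, norm_div, norm_mul, h2πI]
  calc _ ≤ 1 * 1 * (3 / |η|) * (‖f₁ (I / |η|)‖ * 1 / (2 * Real.pi)) := by gcongr
    _ = 3 / Real.pi * (‖f₁ (I / |η|)‖ / (2 * |η|)) := by ring
    _ ≤ ‖f₁ (I / |η|)‖ / (2 * |η|) :=
      mul_le_of_le_one_left (by positivity) ((div_le_one Real.pi_pos).mpr Real.pi_gt_three.le)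

lemma iSup_norm_Fker_ray_le (x₀ T : ℝ) (f₁ : ℂ → ℂ) (x : ℝ) {t : ℝ}
    (ht : t ∈ Set.Icc 0 T) {ρ : ℝ} (hρ : 1 < ρ) {e : ℂ} (he : e = e₁ ∨ e = e₂) :
    ⨆ s ∈ GammatM, ‖Fker x₀ T f₁ x t s (ρ * e)‖ ≤ ‖f₁ (I / ρ)‖ / ρ / 2 := by
  obtain ⟨η, hηρ, hρe⟩ : ∃ η : ℝ, |η| = ρ ∧ (ρ : ℂ) * e = η * e₁ := by
    rcases he with rfl | rfl
    · exact ⟨ρ, abs_of_pos (by linarith), rfl⟩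
    · exact ⟨-ρ, by rw [abs_neg, abs_of_pos (by linarith)], by
        rw [e₂_eq_neg_e₁, ofReal_neg, mul_neg, neg_mul]⟩
  have hbound : 0 ≤ ‖f₁ (I / ρ)‖ / ρ / 2 :=
    div_nonneg (div_nonneg (norm_nonneg _) (by linarith)) zero_le_two
  refine Real.iSup_le (fun s => Real.iSup_le (fun hs => ?_) hbound) hbound
  rw [hρe, div_div, mul_comm ρ, ← hηρ]
  exact norm_Fker_ofReal_mul_e₁_le x₀ T f₁ x ht (hηρ ▸ hρ.le) hs

lemma integral_iSup_norm_Fker_ray_le (x₀ T : ℝ) (f₁ : ℂ → ℂ) (x : ℝ) {t : ℝ}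
    (ht : t ∈ Set.Icc 0 T) (hL1 : IntegrableOn (fun y : ℝ => ‖f₁ (I / y)‖ / y) (Set.Ioi 1))
    {e : ℂ} (he : e = e₁ ∨ e = e₂) :
    ∫ ρ in Set.Ioi (1 : ℝ), ⨆ s ∈ GammatM, ‖Fker x₀ T f₁ x t s (ρ * e)‖ ≤
      (∫ ρ in Set.Ioi (1 : ℝ), ‖f₁ (I / ρ)‖ / ρ) / 2 := by
  rw [← integral_div]
  exact integral_mono_of_nonneg
    (.of_forall fun _ => Real.iSup_nonneg fun _ => Real.iSup_nonneg fun _ => norm_nonneg _)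
    (hL1.div_const 2)
    ((ae_restrict_mem measurableSet_Ioi).mono fun _ hρ =>
      iSup_norm_Fker_ray_le x₀ T f₁ x ht hρ he)

end Paper

/-- The arclength integral over `Γ̃` is the sum of the integrals over its two rays. -/
theorem statement_7_general (x₀ T M : ℝ) (f₁ : ℂ → ℂ)
    (hL1 : IntegrableOn (fun y : ℝ => ‖f₁ (Complex.I / (y : ℂ))‖ / y) (Set.Ioi 1))
    (hL1le : ∫ y in Set.Ioi (1 : ℝ), ‖f₁ (Complex.I / (y : ℂ))‖ / y ≤ 1 / M)
    (x t : ℝ) (ht : t ∈ Set.Icc (0 : ℝ) T) :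
    (∫ ρ in Set.Ioi (1 : ℝ), ⨆ s ∈ GammatM, ‖Fker x₀ T f₁ x t s ((ρ : ℂ) * e₁)‖) +
      (∫ ρ in Set.Ioi (1 : ℝ), ⨆ s ∈ GammatM, ‖Fker x₀ T f₁ x t s ((ρ : ℂ) * e₂)‖) ≤ 1 / M := by
  have h₁ := integral_iSup_norm_Fker_ray_le x₀ T f₁ x ht hL1 (e := e₁) (.inl rfl)
  have h₂ := integral_iSup_norm_Fker_ray_le x₀ T f₁ x ht hL1 (e := e₂) (.inr rfl)
  linarith

/-- Inequality (4.19): `∫_{Γ̃} sup_{s ∈ Γ̃_m} |F(x,t,s,k₁)| |dk₁| ≤ 1/M`, where the arclength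
integral over `Γ̃` is the sum of the integrals over its two rays. -/
theorem statement_7 (x₀ T M : ℝ) (hT : 0 < T) (hM : 2 ≤ M) (f₁ : ℂ → ℂ)
    (hsmooth : ContDiffOn ℝ (⊤ : ℕ∞) (fun y : ℝ => f₁ (Complex.I * (y : ℂ))) (Set.Ioo (0 : ℝ) 1))
    (hvanish : ∀ y ∈ Set.Icc (1 / 2 : ℝ) 1, f₁ (Complex.I * (y : ℂ)) = 0)
    (hL1 : IntegrableOn (fun y : ℝ => ‖f₁ (Complex.I / (y : ℂ))‖ / y) (Set.Ioi 1))
    (hL1le : ∫ y in Set.Ioi (1 : ℝ), ‖f₁ (Complex.I / (y : ℂ))‖ / y ≤ 1 / M)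
    (x t : ℝ) (ht : t ∈ Set.Icc (0 : ℝ) T) :
    (∫ ρ in Set.Ioi (1 : ℝ), ⨆ s ∈ GammatM, ‖Fker x₀ T f₁ x t s ((ρ : ℂ) * e₁)‖) +
      (∫ ρ in Set.Ioi (1 : ℝ), ⨆ s ∈ GammatM, ‖Fker x₀ T f₁ x t s ((ρ : ℂ) * e₂)‖) ≤ 1 / M :=
  statement_7_general x₀ T M f₁ hL1 hL1le x t ht
end
end
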